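/- arXiv:2504.19929 — 4 statements merged into one kernel-verified Lean document; each statement's English description precedes it below -/
import Mathlib

section
/- For coprime integers 0 < q < m, if [e_1,...,e_r] is the Hirzebruch–Jung continued fraction expansion of m/q (so each e_i ≥ 2) and [b_1,...,b_s] is the Hirzebruch–Jung continued fraction expansion of m/(m-q), then the concatenated continued fraction [e_1,...,e_r,1,b_s,...,b_1] evaluates to 0. -/
/-- The value of a Hirzebruch–Jung continued fraction `[e₁,…,e_r]`,
computed as `e₁ - 1/[e₂,…,e_r]` with `[e_r] = e_r`. -/
def hjVal : List ℤ → ℚ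
  | [] => 0
  | [x] => (x : ℚ)
  | x :: y :: xs => (x : ℚ) - (hjVal (y :: xs))⁻¹

/-- `IsHJ m q L` : `L` is the HJ continued fraction expansion of `m/q`
(all entries at least 2 and value `m/q`). -/
def IsHJ (m q : ℤ) (L : List ℤ) : Prop :=
  (∀ e ∈ L, 2 ≤ e) ∧ hjVal L = (m : ℚ) / (q : ℚ)

/-- `IsWahlChain n a L` : `L` is the Wahl chain of `n²/(na-1)` for coprime `0 < a < n`. -/
def IsWahlChain (n a : ℤ) (L : List ℤ) : Prop :=
  0 < a ∧ a < n ∧ Int.gcd n a = 1 ∧ IsHJ (n ^ 2) (n * a - 1) L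

/-!
Write `[L] = p / q` where `(p, q)` is the first column of the product of the matrices
`!![e, -1; 1, 0]` over the entries `e` of `L`. Reversing a chain transposes this product up to
conjugation by `diag(1, -1)`, so `[e_r,…,e_1] = m / q'` and `[b_s,…,b_1] = m / q''` where
`q q' ≡ 1` and `(m - q) q'' ≡ 1 (mod m)`. These congruences force `q' + q'' = m`, hence
`[1, b_s,…,b_1] = 1 - q''/m = q'/m`. On the other side, the `v` with `[e_1,…,e_r, v] = 0` is
found by running `v ↦ 1 / (e - v)` through `e_1, …, e_r` starting from `0`; the iterates stay in
`[0, 1)`, so no division by zero occurs along the way, and the last one is `q'/m`.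
-/

open Matrix

def hjStep (x : ℤ) : Matrix (Fin 2) (Fin 2) ℤ := !![x, -1; 1, 0]

def hjMatrix (L : List ℤ) : Matrix (Fin 2) (Fin 2) ℤ := (L.map hjStep).prod

@[simp] lemma hjMatrix_nil : hjMatrix [] = 1 := rfl

@[simp] lemma hjMatrix_cons (x : ℤ) (L : List ℤ) :
    hjMatrix (x :: L) = hjStep x * hjMatrix L := by
  simp [hjMatrix]

lemma hjMatrix_append (L K : List ℤ) : hjMatrix (L ++ K) = hjMatrix L * hjMatrix K := by
  simp [hjMatrix]

lemma hjMatrix_cons_apply (x : ℤ) (L : List ℤ) (j : Fin 2) :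
    hjMatrix (x :: L) 0 j = x * hjMatrix L 0 j - hjMatrix L 1 j ∧
      hjMatrix (x :: L) 1 j = hjMatrix L 0 j := by
  simp [hjStep, mul_apply, Fin.sum_univ_two]
  ring

lemma det_hjMatrix (L : List ℤ) : (hjMatrix L).det = 1 := by
  induction L with
  | nil => simp
  | cons x L ih => rw [hjMatrix_cons, det_mul, ih]; simp [hjStep]

def hjFlip : Matrix (Fin 2) (Fin 2) ℤ := !![1, 0; 0, -1]

lemma hjFlip_mul_self : hjFlip * hjFlip = 1 := by
  simp [hjFlip, one_fin_two]

lemma transpose_hjStep (x : ℤ) : (hjStep x)ᵀ = hjFlip * hjStep x * hjFlip := by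
  ext i j; fin_cases i <;> fin_cases j <;> simp [hjFlip, hjStep]

lemma hjMatrix_reverse (L : List ℤ) :
    hjMatrix L.reverse = hjFlip * (hjMatrix L)ᵀ * hjFlip := by
  induction L with
  | nil => simp [hjFlip_mul_self]
  | cons x L ih =>
    rw [List.reverse_cons, hjMatrix_append, ih, hjMatrix_cons, hjMatrix_cons, hjMatrix_nil,
      mul_one, transpose_mul, transpose_hjStep]
    simp only [mul_assoc, hjFlip_mul_self, mul_one]

lemma hjMatrix_reverse_apply (L : List ℤ) :
    hjMatrix L.reverse 0 0 = hjMatrix L 0 0 ∧ hjMatrix L.reverse 1 0 = -hjMatrix L 0 1 := by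
  simp [hjMatrix_reverse, hjFlip, mul_apply, vecMul, dotProduct, Fin.sum_univ_two]

lemma hjMatrix_bounds {L : List ℤ} (h : ∀ e ∈ L, 2 ≤ e) :
    0 ≤ hjMatrix L 1 0 ∧ hjMatrix L 1 0 < hjMatrix L 0 0 := by
  induction L with
  | nil => simp
  | cons x L ih =>
    obtain ⟨hP, hQ⟩ := hjMatrix_cons_apply x L 0
    obtain ⟨h0, h1⟩ := ih fun e he => h e (List.mem_cons_of_mem x he)
    have hx := h x List.mem_cons_self
    rw [hP, hQ]
    constructor <;> nlinarith

lemma hjMatrix_one_zero_pos {L : List ℤ} (h : ∀ e ∈ L, 2 ≤ e) (hL : L ≠ []) :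
    0 < hjMatrix L 1 0 := by
  obtain ⟨x, L, rfl⟩ := List.exists_cons_of_ne_nil hL
  obtain ⟨h0, h1⟩ := hjMatrix_bounds fun e he => h e (List.mem_cons_of_mem x he)
  rw [(hjMatrix_cons_apply x L 0).2]
  exact h0.trans_lt h1

lemma isCoprime_hjMatrix (L : List ℤ) : IsCoprime (hjMatrix L 0 0) (hjMatrix L 1 0) :=
  ⟨hjMatrix L 1 1, -hjMatrix L 0 1, by
    linear_combination (det_fin_two _).symm.trans (det_hjMatrix L)⟩

lemma hjVal_cons_of_ne_nil (x : ℤ) {L : List ℤ} (hL : L ≠ []) :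
    hjVal (x :: L) = x - (hjVal L)⁻¹ := by
  obtain ⟨y, L, rfl⟩ := List.exists_cons_of_ne_nil hL
  rfl

lemma hjVal_eq_div {L : List ℤ} (h : ∀ e ∈ L, 2 ≤ e) :
    hjVal L = hjMatrix L 0 0 / hjMatrix L 1 0 := by
  induction L with
  | nil => simp [hjVal]
  | cons x L ih =>
    obtain ⟨hP, hQ⟩ := hjMatrix_cons_apply x L 0
    rw [hP, hQ]
    rcases eq_or_ne L [] with rfl | hL
    · simp [hjVal]
    have hP0 : (hjMatrix L 0 0 : ℚ) ≠ 0 := by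
      have := hjMatrix_bounds fun e he => h e (List.mem_cons_of_mem x he)
      exact_mod_cast (this.1.trans_lt this.2).ne'
    rw [hjVal_cons_of_ne_nil x hL, ih fun e he => h e (List.mem_cons_of_mem x he)]
    field_simp
    push_cast
    ring

section IsHJ

variable {m q : ℤ} {L : List ℤ}

lemma IsHJ.hjMatrix_eq (hL : IsHJ m q L) (hm : 0 < m) (hq : 0 < q)
    (hcop : Int.gcd m q = 1) : hjMatrix L 0 0 = m ∧ hjMatrix L 1 0 = q := by
  have hval := (hjVal_eq_div hL.1).symm.trans hL.2
  have hQ : 0 < hjMatrix L 1 0 := by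
    refine (hjMatrix_bounds hL.1).1.lt_of_ne' fun hQ => ?_
    rw [hQ, Int.cast_zero, div_zero] at hval
    exact (div_pos (Int.cast_pos.2 hm) (Int.cast_pos.2 hq)).ne' hval.symm
  exact Rat.div_int_inj hQ hq (Int.isCoprime_iff_gcd_eq_one.1 (isCoprime_hjMatrix L)) hcop hval

lemma IsHJ.ne_nil (hL : IsHJ m q L) (hm : 0 < m) (hq : 0 < q) :
    L ≠ [] := by
  rintro rfl
  exact (div_pos (Int.cast_pos.2 hm) (Int.cast_pos.2 hq)).ne hL.2

lemma IsHJ.reverse_one_zero_mem_Ioo (hL : IsHJ m q L) (hm : 0 < m)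
    (hq : 0 < q) (hcop : Int.gcd m q = 1) : hjMatrix L.reverse 1 0 ∈ Set.Ioo 0 m := by
  have hrev : ∀ e ∈ L.reverse, 2 ≤ e := fun e he => hL.1 e (List.mem_reverse.1 he)
  refine ⟨hjMatrix_one_zero_pos hrev (List.reverse_ne_nil_iff.2 (hL.ne_nil hm hq)), ?_⟩
  rw [← (hL.hjMatrix_eq hm hq hcop).1, ← (hjMatrix_reverse_apply L).1]
  exact (hjMatrix_bounds hrev).2

lemma IsHJ.hjVal_reverse (hL : IsHJ m q L) (hm : 0 < m) (hq : 0 < q)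
    (hcop : Int.gcd m q = 1) : hjVal L.reverse = m / hjMatrix L.reverse 1 0 := by
  rw [hjVal_eq_div fun e he => hL.1 e (List.mem_reverse.1 he), (hjMatrix_reverse_apply L).1,
    (hL.hjMatrix_eq hm hq hcop).1]

lemma IsHJ.dvd_mul_reverse_one_zero_sub_one (hL : IsHJ m q L) (hm : 0 < m) (hq : 0 < q)
    (hcop : Int.gcd m q = 1) :
    m ∣ q * hjMatrix L.reverse 1 0 - 1 := by
  obtain ⟨hP, hQ⟩ := hL.hjMatrix_eq hm hq hcop
  refine ⟨-hjMatrix L 1 1, ?_⟩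
  rw [(hjMatrix_reverse_apply L).2, ← hP, ← hQ]
  linear_combination (det_fin_two _).symm.trans (det_hjMatrix L)

end IsHJ

lemma add_eq_of_dvd_mul_sub_one {m q a b : ℤ} (ha : a ∈ Set.Ioo 0 m) (hb : b ∈ Set.Ioo 0 m)
    (hqa : m ∣ q * a - 1) (hqb : m ∣ (m - q) * b - 1) : a + b = m := by
  obtain ⟨k, hk⟩ := hqa
  obtain ⟨l, hl⟩ := hqb
  have hdvd : m ∣ a + b - m :=
    ⟨a * (k + b - l) - k * (a + b) - 1, by linear_combination (-b) * hk - a * hl⟩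
  have hlt : |a + b - m| < m :=
    abs_sub_lt_iff.2 ⟨by linarith [ha.2, hb.2], by linarith [ha.1, hb.1]⟩
  linarith [Int.eq_zero_of_abs_lt_dvd hdvd hlt]

/-- `hjPreimage E u` is the `v` with `[e₁,…,e_r,v] = u`. -/
def hjPreimage : List ℤ → ℚ → ℚ
  | [], u => u
  | e :: E, u => hjPreimage E (e - u)⁻¹

lemma inv_sub_mem_Ico {e : ℤ} {u : ℚ} (he : 2 ≤ e) (hu : u ∈ Set.Ico 0 1) :
    ((e : ℚ) - u)⁻¹ ∈ Set.Ico 0 1 := by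
  have he' : (2 : ℚ) ≤ e := by exact_mod_cast he
  obtain ⟨hu0, hu1⟩ := hu
  exact ⟨inv_nonneg.2 (by linarith), inv_lt_one_of_one_lt₀ (by linarith)⟩

lemma hjVal_append_of_eq_hjPreimage {E T : List ℤ} {u : ℚ} (hE : ∀ e ∈ E, 2 ≤ e)
    (hu : u ∈ Set.Ico 0 1) (hT : T ≠ []) (h : hjVal T = hjPreimage E u) :
    hjVal (E ++ T) = u := by
  induction E generalizing u with
  | nil => exact h
  | cons e E ih =>
    have hET := ih (fun x hx => hE x (List.mem_cons_of_mem e hx))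
      (inv_sub_mem_Ico (hE e List.mem_cons_self) hu) h
    rw [List.cons_append, hjVal_cons_of_ne_nil e (List.append_ne_nil_of_right_ne_nil E hT), hET,
      inv_inv, sub_sub_cancel]

lemma hjPreimage_eq {E : List ℤ} {u : ℚ} (hE : ∀ e ∈ E, 2 ≤ e) (hu : u ∈ Set.Ico 0 1) :
    hjPreimage E u =
      (hjMatrix E 1 1 * u - hjMatrix E 0 1) / (hjMatrix E 0 0 - hjMatrix E 1 0 * u) := by
  induction E generalizing u with
  | nil => simp [hjPreimage]
  | cons e E ih =>
    have he2 : (2 : ℚ) ≤ e := by exact_mod_cast hE e List.mem_cons_self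
    have he : (e : ℚ) - u ≠ 0 := by linarith [hu.2]
    rw [hjPreimage, ih (fun x hx => hE x (List.mem_cons_of_mem e hx))
      (inv_sub_mem_Ico (hE e List.mem_cons_self) hu)]
    obtain ⟨h00, h10⟩ := hjMatrix_cons_apply e E 0
    obtain ⟨h01, h11⟩ := hjMatrix_cons_apply e E 1
    rw [h00, h10, h01, h11]
    push_cast
    conv_rhs => rw [← div_div_div_cancel_right₀ he]
    congr 1 <;> field_simp <;> ring

lemma hjPreimage_zero {E : List ℤ} (hE : ∀ e ∈ E, 2 ≤ e) :
    hjPreimage E 0 = hjMatrix E.reverse 1 0 / hjMatrix E 0 0 := by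
  simp [hjPreimage_eq hE ⟨le_rfl, one_pos⟩, (hjMatrix_reverse_apply E).2]

/-- For coprime `0 < q < m`, if `E` expands `m/q` and `B` expands `m/(m-q)`,
then `[e₁,…,e_r,1,b_s,…,b₁]` evaluates to 0. -/
theorem stmt0 (m q : ℤ) (E B : List ℤ)
    (hq : 0 < q) (hqm : q < m) (hcop : Int.gcd m q = 1)
    (hE : IsHJ m q E) (hB : IsHJ m (m - q) B) :
    hjVal (E ++ 1 :: B.reverse) = 0 := by
  have hm : 0 < m := hq.trans hqm
  have hmq : 0 < m - q := sub_pos.2 hqm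
  have hcop' : Int.gcd m (m - q) = 1 := by simpa using hcop
  have hab : hjMatrix E.reverse 1 0 + hjMatrix B.reverse 1 0 = m :=
    add_eq_of_dvd_mul_sub_one (hE.reverse_one_zero_mem_Ioo hm hq hcop)
      (hB.reverse_one_zero_mem_Ioo hm hmq hcop') (hE.dvd_mul_reverse_one_zero_sub_one hm hq hcop)
      (hB.dvd_mul_reverse_one_zero_sub_one hm hmq hcop')
  have hval : hjVal (1 :: B.reverse) = hjPreimage E 0 := by
    have hm' : (m : ℚ) ≠ 0 := by exact_mod_cast hm.ne'
    have hab' : (hjMatrix E.reverse 1 0 : ℚ) + hjMatrix B.reverse 1 0 = m := by exact_mod_cast hab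
    rw [hjPreimage_zero hE.1, (hE.hjMatrix_eq hm hq hcop).1, hjVal_cons_of_ne_nil 1
      (List.reverse_ne_nil_iff.2 (hB.ne_nil hm hmq)), hB.hjVal_reverse hm hmq hcop', inv_div,
      eq_div_iff hm', sub_mul, div_mul_cancel₀ _ hm']
    push_cast
    linarith
  exact hjVal_append_of_eq_hjPreimage hE.1 ⟨le_rfl, one_pos⟩ (by simp) hval
end

section
/- Let [e_1,...,e_r] be an HJ continued fraction with all e_j ≥ 2, let 1 < i ≤ r, and set n/a = [e_1,...,e_{i-1}] and n/(n-a) = [x_1,...,x_u]. Then the sequence [e_1,...,e_{i-1}+x_u, x_{u-1},...,x_1, 1, e_1,...,e_r] blows down (by iterated contraction of 1's) to [e_1,...,e_{i-1}, e_i - 1, e_{i+1},...,e_r]. -/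
/-- One blow-down move on a chain: `[…,u,1,v,…] ↦ […,u-1,v-1,…]`,
including the boundary cases `[1,v,…] ↦ [v-1,…]` and `[…,u,1] ↦ […,u-1]`. -/
inductive BDStep : List ℤ → List ℤ → Prop
  | mid (l r : List ℤ) (u v : ℤ) :
      BDStep (l ++ u :: 1 :: v :: r) (l ++ (u - 1) :: (v - 1) :: r)
  | left (r : List ℤ) (v : ℤ) : BDStep (1 :: v :: r) ((v - 1) :: r)
  | right (l : List ℤ) (u : ℤ) : BDStep (l ++ [u, 1]) (l ++ [u - 1])

/-- A zero continued fraction: a chain that blows down to `[1,1]`. -/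
def IsZCF (L : List ℤ) : Prop :=
  Relation.ReflTransGen BDStep L [1, 1]

/-- `AdmitsZCF L lam` : one can decrease some entries of `L` by positive integers
with total sum `lam + 1` so that the result is a zero continued fraction. -/
def AdmitsZCF (L : List ℤ) (lam : ℤ) : Prop :=
  ∃ K : List ℤ, K.length = L.length ∧ (∀ i : ℕ, K.getD i 0 ≤ L.getD i 0) ∧
    L.sum - K.sum = lam + 1 ∧ IsZCF K

/-!
If `n/a = [e₁,…,e_k]` and `n/(n-a) = [x₁,…,x_u]`, then `1/[e₁,…,e_k] + 1/[x₁,…,x_u] = 1`.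
Since every HJ value with entries `≥ 2` lies in `(e₁ - 1, e₁]`, this forces `e₁ = 2` or `x₁ = 2`,
and both only for the pair `([2], [2])`. Contracting the `1` in `[…, x₁, 1, e₁, …]` leaves
`[…, x₂, 1, e₁ - 1, …]` when `x₁ = 2` and `[…, x₁ - 1, 1, e₂, …]` when `e₁ = 2`, and in either case
the two chains around the new `1` again satisfy the same relation. Induction on the total length
then contracts `[…, e_k + x_u, x_{u-1}, …, x₁, 1, e₁, …, e_k, v, …]` down to `[…, e_k, v - 1, …]`.
-/

open Relation

namespace List

variable {α : Type*} [Inhabited α]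

theorem getLast!_eq_getLast {l : List α} (h : l ≠ []) : l.getLast! = l.getLast h := by
  simp [getLast!_eq_getLast?_getD, getLast?_eq_some_getLast h]

theorem getLast!_cons_of_ne_nil {a : α} {l : List α} (h : l ≠ []) :
    (a :: l).getLast! = l.getLast! := by
  rw [getLast!_eq_getLast (cons_ne_nil a l), getLast!_eq_getLast h, getLast_cons h]

theorem dropLast_append_getLast! {l : List α} (h : l ≠ []) : l.dropLast ++ [l.getLast!] = l := by
  rw [getLast!_eq_getLast h, dropLast_append_getLast h]

end List

theorem hjVal_cons (x : ℤ) (L : List ℤ) : hjVal (x :: L) = x - (hjVal L)⁻¹ := by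
  cases L <;> simp [hjVal]

section HJValue

variable {L : List ℤ}

theorem inv_hjVal_lt_one (hL : ∀ e ∈ L, 2 ≤ e) : (hjVal L)⁻¹ < 1 := by
  induction L with
  | nil => simp [hjVal]
  | cons x L ih =>
    have hx : (2 : ℚ) ≤ x := by exact_mod_cast hL x List.mem_cons_self
    have ht := ih fun e he => hL e (List.mem_cons_of_mem x he)
    rw [hjVal_cons]
    exact inv_lt_one_of_one_lt₀ (by linarith)

theorem sub_one_lt_hjVal_cons {x : ℤ} (hL : ∀ e ∈ x :: L, 2 ≤ e) : (x : ℚ) - 1 < hjVal (x :: L) := by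
  rw [hjVal_cons]
  linarith [inv_hjVal_lt_one fun e he => hL e (List.mem_cons_of_mem x he)]

theorem one_lt_hjVal (hL : ∀ e ∈ L, 2 ≤ e) (hne : L ≠ []) : 1 < hjVal L := by
  obtain ⟨x, L, rfl⟩ := List.exists_cons_of_ne_nil hne
  have hx : (2 : ℚ) ≤ x := by exact_mod_cast hL x List.mem_cons_self
  linarith [sub_one_lt_hjVal_cons hL]

theorem inv_hjVal_nonneg (hL : ∀ e ∈ L, 2 ≤ e) : 0 ≤ (hjVal L)⁻¹ := by
  rcases eq_or_ne L [] with rfl | hne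
  · simp [hjVal]
  · exact inv_nonneg.2 (by linarith [one_lt_hjVal hL hne])

theorem inv_hjVal_pos (hL : ∀ e ∈ L, 2 ≤ e) (hne : L ≠ []) : 0 < (hjVal L)⁻¹ :=
  inv_pos.2 (by linarith [one_lt_hjVal hL hne])

end HJValue

structure HJDual (E X : List ℤ) : Prop where
  two_le_left : ∀ e ∈ E, 2 ≤ e
  two_le_right : ∀ x ∈ X, 2 ≤ x
  inv_add_inv : (hjVal E)⁻¹ + (hjVal X)⁻¹ = 1

namespace HJDual

variable {E X : List ℤ} {e x : ℤ}

theorem of_isHJ {n a : ℤ} (hE : IsHJ n a E) (hX : IsHJ n (n - a) X) (hn : n ≠ 0) :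
    HJDual E X where
  two_le_left := hE.1
  two_le_right := hX.1
  inv_add_inv := by
    rw [hE.2, hX.2, inv_div, inv_div, ← add_div]
    push_cast
    rw [add_sub_cancel, div_self (by exact_mod_cast hn)]

theorem symm (h : HJDual E X) : HJDual X E :=
  ⟨h.two_le_right, h.two_le_left, by rw [add_comm]; exact h.inv_add_inv⟩

theorem left_ne_nil (h : HJDual E X) : E ≠ [] := by
  rintro rfl
  have h1 : (hjVal X)⁻¹ = 1 := by simpa [hjVal] using h.inv_add_inv
  exact (inv_hjVal_lt_one h.two_le_right).ne h1

theorem right_ne_nil (h : HJDual E X) : X ≠ [] :=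
  h.symm.left_ne_nil

theorem eq_two_or_eq_two (h : HJDual (e :: E) (x :: X)) : e = 2 ∨ x = 2 := by
  have he := h.two_le_left e List.mem_cons_self
  have hx := h.two_le_right x List.mem_cons_self
  by_contra! hne
  have he3 : (3 : ℚ) ≤ e := by exact_mod_cast (show (3 : ℤ) ≤ e by omega)
  have hx3 : (3 : ℚ) ≤ x := by exact_mod_cast (show (3 : ℤ) ≤ x by omega)
  have hE := sub_one_lt_hjVal_cons h.two_le_left
  have hX := sub_one_lt_hjVal_cons h.two_le_right
  have hE2 : (hjVal (e :: E))⁻¹ < 2⁻¹ := (inv_lt_inv₀ (by linarith) (by norm_num)).2 (by linarith)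
  have hX2 : (hjVal (x :: X))⁻¹ < 2⁻¹ := (inv_lt_inv₀ (by linarith) (by norm_num)).2 (by linarith)
  linarith [h.inv_add_inv]

theorem tail_eq_nil_of_two_two (h : HJDual (2 :: E) (2 :: X)) : E = [] := by
  by_contra hne
  have hE : hjVal (2 :: E) < 2 := by
    rw [hjVal_cons]
    linarith [inv_hjVal_pos (fun e he => h.two_le_left e (List.mem_cons_of_mem 2 he)) hne]
  have hX : hjVal (2 :: X) ≤ 2 := by
    rw [hjVal_cons]
    linarith [inv_hjVal_nonneg fun x hx => h.two_le_right x (List.mem_cons_of_mem 2 hx)]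
  have hE1 := one_lt_hjVal h.two_le_left (List.cons_ne_nil 2 E)
  have hX1 := one_lt_hjVal h.two_le_right (List.cons_ne_nil 2 X)
  have hE2 : 2⁻¹ < (hjVal (2 :: E))⁻¹ := (inv_lt_inv₀ (by norm_num) (by linarith)).2 hE
  have hX2 : 2⁻¹ ≤ (hjVal (2 :: X))⁻¹ := (inv_le_inv₀ (by norm_num) (by linarith)).2 hX
  linarith [h.inv_add_inv]

theorem of_cons_two (h : HJDual (e :: E) (2 :: X)) (he : 3 ≤ e) : HJDual ((e - 1) :: E) X where
  two_le_left y hy := by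
    rcases List.mem_cons.1 hy with rfl | hy
    · omega
    · exact h.two_le_left y (List.mem_cons_of_mem e hy)
  two_le_right y hy := h.two_le_right y (List.mem_cons_of_mem 2 hy)
  inv_add_inv := by
    have hp := one_lt_hjVal h.two_le_left (List.cons_ne_nil e E)
    have hq := one_lt_hjVal h.two_le_right (List.cons_ne_nil 2 X)
    have hpq := h.inv_add_inv
    have hE : hjVal ((e - 1) :: E) = hjVal (e :: E) - 1 := by
      simp only [hjVal_cons]; push_cast; ring
    have hX : (hjVal X)⁻¹ = 2 - hjVal (2 :: X) := by
      rw [hjVal_cons]; push_cast; ring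
    have hp1 : hjVal (e :: E) - 1 ≠ 0 := by linarith
    rw [hE, hX]
    field_simp at hpq ⊢
    linear_combination hpq

theorem cons_cases (h : HJDual (e :: E) (x :: X)) :
    (e = 2 ∧ x = 2 ∧ E = [] ∧ X = []) ∨ (x = 2 ∧ HJDual ((e - 1) :: E) X) ∨
      (e = 2 ∧ HJDual E ((x - 1) :: X)) := by
  have he := h.two_le_left e List.mem_cons_self
  have hx := h.two_le_right x List.mem_cons_self
  obtain rfl | he3 : e = 2 ∨ 3 ≤ e := by omega
  · obtain rfl | hx3 : x = 2 ∨ 3 ≤ x := by omega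
    · exact Or.inl ⟨rfl, rfl, h.tail_eq_nil_of_two_two, h.symm.tail_eq_nil_of_two_two⟩
    · exact Or.inr (Or.inr ⟨rfl, (h.symm.of_cons_two hx3).symm⟩)
  · obtain rfl : x = 2 := h.eq_two_or_eq_two.resolve_left (by omega)
    exact Or.inr (Or.inl ⟨rfl, h.of_cons_two he3⟩)

end HJDual

theorem HJDual.blowDown {E X : List ℤ} (h : HJDual E X) (l T : List ℤ) (c v : ℤ) :
    ReflTransGen BDStep (l ++ (c + X.getLast!) :: (X.dropLast.reverse ++ 1 :: (E ++ v :: T)))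
      (l ++ c :: (v - 1) :: T) := by
  match E, X, h with
  | [], _, h => exact absurd rfl h.left_ne_nil
  | _, [], h => exact absurd rfl h.right_ne_nil
  | e :: E, x :: X, h =>
    rcases h.cons_cases with ⟨rfl, rfl, rfl, rfl⟩ | ⟨rfl, h'⟩ | ⟨rfl, h'⟩
    · refine .head (b := l ++ (c + 1) :: 1 :: v :: T) ?_ (.single ?_)
      · convert BDStep.mid l (v :: T) (c + 2) 2 using 1
        · simp [List.getLast!]
        · simp; ring
      · convert BDStep.mid l T (c + 1) v using 1; simp
    · have hX : X ≠ [] := h'.right_ne_nil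
      refine .head ?_ (h'.blowDown l T c v)
      simp only [List.getLast!_cons_of_ne_nil hX, List.dropLast_cons_of_ne_nil hX]
      convert BDStep.mid (l ++ (c + X.getLast!) :: X.dropLast.reverse) (E ++ v :: T) 2 e using 1
        <;> simp
    · refine .head ?_ (h'.blowDown l T c v)
      rcases eq_or_ne X [] with rfl | hX
      · convert BDStep.mid l (E ++ v :: T) (c + x) 2 using 1
        · simp [List.getLast!]
        · simp [List.getLast!]; ring
      · simp only [List.getLast!_cons_of_ne_nil hX, List.dropLast_cons_of_ne_nil hX]
        convert BDStep.mid (l ++ (c + X.getLast!) :: X.dropLast.reverse) (E ++ v :: T) x 2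
          using 1 <;> simp
termination_by E.length + X.length

theorem stmt5_general (L X : List ℤ) (n a : ℤ) (j : ℕ) (hjr : j < L.length) (ha : 0 < a) (han : a < n)
    (hpre : IsHJ n a (L.take j)) (hX : IsHJ n (n - a) X) :
    Relation.ReflTransGen BDStep
      ((L.take j).dropLast ++ ((L.take j).getLast! + X.getLast!) ::
          (X.dropLast.reverse ++ 1 :: L))
      (L.take j ++ (L.getD j 0 - 1) :: L.drop (j + 1)) := by
  have hdual := HJDual.of_isHJ hpre hX (by omega)
  have hL_eq : L.take j ++ L.getD j 0 :: L.drop (j + 1) = L := by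
    rw [List.getD_eq_getElem _ _ hjr, ← List.drop_eq_getElem_cons hjr, List.take_append_drop]
  have htarget : L.take j ++ (L.getD j 0 - 1) :: L.drop (j + 1) =
      (L.take j).dropLast ++ (L.take j).getLast! :: (L.getD j 0 - 1) :: L.drop (j + 1) := by
    conv_lhs => rw [← List.dropLast_append_getLast! hdual.left_ne_nil]
    simp
  rw [htarget]
  have key :=
    hdual.blowDown (L.take j).dropLast (L.drop (j + 1)) (L.take j).getLast! (L.getD j 0)
  rwa [hL_eq] at key

/-- Sliding: if `n/a = [e₁,…,e_{i-1}]` (the first `j = i-1` entries of `L`) and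
`n/(n-a) = [x₁,…,x_u]`, then
`[e₁,…,e_{i-1}+x_u, x_{u-1},…,x₁, 1, e₁,…,e_r]` blows down to
`[e₁,…,e_{i-1}, e_i - 1, e_{i+1},…,e_r]`. -/
theorem stmt5 (L X : List ℤ) (hL : ∀ e ∈ L, 2 ≤ e)
    (n a : ℤ) (j : ℕ) (hj1 : 1 ≤ j) (hjr : j < L.length)
    (ha : 0 < a) (han : a < n) (hcop : Int.gcd n a = 1)
    (hpre : IsHJ n a (L.take j)) (hX : IsHJ n (n - a) X) :
    Relation.ReflTransGen BDStep
      ((L.take j).dropLast ++ ((L.take j).getLast! + X.getLast!) ::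
          (X.dropLast.reverse ++ 1 :: L))
      (L.take j ++ (L.getD j 0 - 1) :: L.drop (j + 1)) :=
  stmt5_general L X n a j hjr ha han hpre hX
end

section
/- Suppose the matrix identity [[n², -n²+na+1],[na-1, -na+a²+1]] = [[m_1, -q_1],[q_1^{-1}, (1-q_1 q_1^{-1})/m_1]] · [[d, -1],[1, 0]] · [[m_2, -q_2^{-1}],[q_2, (1-q_2 q_2^{-1})/m_2]] holds, where 0 < a < n and 0 < q_i < m_i are pairs of coprime positive integers, q_i^{-1} is the inverse of q_i mod m_i in (0, m_i), and d ≥ 2. Then: (1) n² = m_1 m_2 d - q_1 m_2 - q_2 m_1, and (2) m_1 + m_2 = n(m_1 a - n q_1^{-1}) = n(m_2(n-a) - n q_2^{-1}). -/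
/-- From the matrix identity factoring `[[n²,-n²+na+1],[na-1,-na+a²+1]]`
through `m₁/q₁`, the central mark `d`, and `m₂/q₂`, one obtains
`n² = m₁m₂d - q₁m₂ - q₂m₁` and `m₁+m₂ = n(m₁a - nq₁⁻¹) = n(m₂(n-a) - nq₂⁻¹)`. -/
theorem stmt13 (n a m₁ q₁ q₁inv m₂ q₂ q₂inv d : ℤ)
    (ha : 0 < a) (han : a < n) (hcopna : Int.gcd n a = 1)
    (hq₁ : 0 < q₁) (hq₁m : q₁ < m₁) (hcop₁ : Int.gcd m₁ q₁ = 1)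
    (hq₂ : 0 < q₂) (hq₂m : q₂ < m₂) (hcop₂ : Int.gcd m₂ q₂ = 1)
    (hq₁i : 0 < q₁inv) (hq₁im : q₁inv < m₁) (hinv₁ : m₁ ∣ q₁ * q₁inv - 1)
    (hq₂i : 0 < q₂inv) (hq₂im : q₂inv < m₂) (hinv₂ : m₂ ∣ q₂ * q₂inv - 1)
    (hd : 2 ≤ d)
    (hmat : (!![n ^ 2, -n ^ 2 + n * a + 1; n * a - 1, -(n * a) + a ^ 2 + 1] :
        Matrix (Fin 2) (Fin 2) ℤ) =
      !![m₁, -q₁; q₁inv, (1 - q₁ * q₁inv) / m₁] * !![d, -1; 1, 0] *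
        !![m₂, -q₂inv; q₂, (1 - q₂ * q₂inv) / m₂]) :
    n ^ 2 = m₁ * m₂ * d - q₁ * m₂ - q₂ * m₁ ∧
    m₁ + m₂ = n * (m₁ * a - n * q₁inv) ∧
    m₁ + m₂ = n * (m₂ * (n - a) - n * q₂inv) := by
  have hd₁ : m₁ ∣ 1 - q₁ * q₁inv := (dvd_sub_comm).mp hinv₁
  have hd₂ : m₂ ∣ 1 - q₂ * q₂inv := (dvd_sub_comm).mp hinv₂
  have hk₁ : m₁ * ((1 - q₁ * q₁inv) / m₁) = 1 - q₁ * q₁inv := Int.mul_ediv_cancel' hd₁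
  have hk₂ : m₂ * ((1 - q₂ * q₂inv) / m₂) = 1 - q₂ * q₂inv := Int.mul_ediv_cancel' hd₂
  set e₁ := (1 - q₁ * q₁inv) / m₁ with he₁
  set e₂ := (1 - q₂ * q₂inv) / m₂ with he₂
  have h00 := congrFun (congrFun hmat 0) 0
  have h01 := congrFun (congrFun hmat 0) 1
  have h10 := congrFun (congrFun hmat 1) 0
  simp [Matrix.mul_apply, Fin.sum_univ_succ] at h00 h01 h10
  have hm₁ : m₁ ≠ 0 := by linarith
  have hm₂ : m₂ ≠ 0 := by linarith
  refine ⟨by linear_combination h00, ?_, ?_⟩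
  · linear_combination -m₁ * h10 - m₂ * hk₁ + q₁inv * h00
  · linear_combination m₂ * h01 - m₁ * hk₂ + q₂inv * h00
end

section
/- Conversely to the factorization identities: let 0 < a < n and 0 < q_i < m_i be coprime pairs with inverses q_i^{-1} mod m_i in (0, m_i), and let d ≥ 2 satisfy q_1 m_2 + q_2 m_1 + n² = m_1 m_2 d and m_1 + m_2 = n(m_1 a - n q_1^{-1}) = n(m_2(n-a) - n q_2^{-1}). Then the product [[m_1, -q_1],[q_1^{-1}, (1-q_1 q_1^{-1})/m_1]] · [[d, -1],[1, 0]] · [[m_2, -q_2^{-1}],[q_2, (1-q_2 q_2^{-1})/m_2]] equals [[n², -n²+na+1],[na-1, -na+a²+1]]. -/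
/-- Conversely: if `q₁m₂ + q₂m₁ + n² = m₁m₂d` and
`m₁+m₂ = n(m₁a - nq₁⁻¹) = n(m₂(n-a) - nq₂⁻¹)`, then the matrix product
`[[m₁,-q₁],[q₁⁻¹,(1-q₁q₁⁻¹)/m₁]]·[[d,-1],[1,0]]·[[m₂,-q₂⁻¹],[q₂,(1-q₂q₂⁻¹)/m₂]]`
equals `[[n²,-n²+na+1],[na-1,-na+a²+1]]`. -/
theorem stmt14 (n a m₁ q₁ q₁inv m₂ q₂ q₂inv d : ℤ)
    (ha : 0 < a) (han : a < n) (hcopna : Int.gcd n a = 1)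
    (hq₁ : 0 < q₁) (hq₁m : q₁ < m₁) (hcop₁ : Int.gcd m₁ q₁ = 1)
    (hq₂ : 0 < q₂) (hq₂m : q₂ < m₂) (hcop₂ : Int.gcd m₂ q₂ = 1)
    (hq₁i : 0 < q₁inv) (hq₁im : q₁inv < m₁) (hinv₁ : m₁ ∣ q₁ * q₁inv - 1)
    (hq₂i : 0 < q₂inv) (hq₂im : q₂inv < m₂) (hinv₂ : m₂ ∣ q₂ * q₂inv - 1)
    (hd : 2 ≤ d)
    (h1 : q₁ * m₂ + q₂ * m₁ + n ^ 2 = m₁ * m₂ * d)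
    (h2 : m₁ + m₂ = n * (m₁ * a - n * q₁inv))
    (h3 : m₁ + m₂ = n * (m₂ * (n - a) - n * q₂inv)) :
    (!![m₁, -q₁; q₁inv, (1 - q₁ * q₁inv) / m₁] * !![d, -1; 1, 0] *
        !![m₂, -q₂inv; q₂, (1 - q₂ * q₂inv) / m₂] : Matrix (Fin 2) (Fin 2) ℤ) =
      !![n ^ 2, -n ^ 2 + n * a + 1; n * a - 1, -(n * a) + a ^ 2 + 1] := by
  have hm₁ : (0:ℤ) < m₁ := hq₁.trans hq₁m
  have hm₂ : (0:ℤ) < m₂ := hq₂.trans hq₂m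
  have hn : (0:ℤ) < n := ha.trans han
  have hd₁ : m₁ ∣ 1 - q₁ * q₁inv := (neg_sub (q₁ * q₁inv) 1) ▸ (dvd_neg.2 hinv₁)
  have hd₂ : m₂ ∣ 1 - q₂ * q₂inv := (neg_sub (q₂ * q₂inv) 1) ▸ (dvd_neg.2 hinv₂)
  set c₁ : ℤ := (1 - q₁ * q₁inv) / m₁ with hc₁
  set c₂ : ℤ := (1 - q₂ * q₂inv) / m₂ with hc₂
  have e₁ : m₁ * c₁ = 1 - q₁ * q₁inv := Int.mul_ediv_cancel' hd₁
  have e₂ : m₂ * c₂ = 1 - q₂ * q₂inv := Int.mul_ediv_cancel' hd₂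
  have hu : n ^ 2 * q₁inv = n * m₁ * a - m₁ - m₂ := by linear_combination h2
  have hv : n ^ 2 * q₂inv = n * m₂ * (n - a) - m₁ - m₂ := by linear_combination h3
  ext i j
  fin_cases i <;> fin_cases j <;>
    simp [Matrix.mul_apply, Fin.sum_univ_succ]
  · linear_combination -h1
  · have key : m₂ * ((m₁ * d - q₁) * (-q₂inv) + (-m₁) * c₂) = m₂ * (-n ^ 2 + n * a + 1) := by
      linear_combination q₂inv * h1 - m₁ * e₂ - hv
    have := mul_left_cancel₀ hm₂.ne' key
    linear_combination this
  · have key : m₁ * ((q₁inv * d + c₁) * m₂ + (-q₁inv) * q₂) = m₁ * (n * a - 1) := by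
      linear_combination -q₁inv * h1 + hu + m₂ * e₁
    have := mul_left_cancel₀ hm₁.ne' key
    linear_combination this
  · have key : (n ^ 2 * m₁ * m₂) * ((q₁inv * d + c₁) * (-q₂inv) + (-q₁inv) * c₂) =
        (n ^ 2 * m₁ * m₂) * (-(n * a) + a ^ 2 + 1) := by
      linear_combination (n ^ 2 * q₁inv * q₂inv) * h1 - (n ^ 2 * q₂inv * m₂) * e₁ -
        (n ^ 2 * q₁inv * m₁) * e₂ - (n * m₁ * a - m₁) * hv - (n ^ 2 * q₂inv + m₁) * hu
    have hne : (n ^ 2 * m₁ * m₂ : ℤ) ≠ 0 := by positivity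
    have := mul_left_cancel₀ hne key
    linear_combination this
end
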